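/- Suppose Y ~ N_n(β*, I_n) (saturated model), π is a differentiable positive prior on ℝ^n, w: ℝ^n → [0,∞] is differentiable and convex, and w̄(z) = w(z) + ½‖z‖². Any critical point β̂* of the approximate selective MAP objective ½‖y - β*‖² - h(β*) - log π(β*), where h(μ) = inf_z{½‖μ-z‖² + w(z)}, satisfies β̂* = ∇w̄(y + ∇log π(β̂*)). In particular, with the constant prior π ∝ 1, the approximate selective MLE is β̂* = y + ∇w(y). -/

import Mathlib

/-!
The envelope `h(μ) = ⨅ z, ½‖μ - z‖² + w z` is attained at a proximal point `z₀` (the objective is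
coercive), and Fermat's rule gives `∇w(z₀) = μ - z₀`. For convex `w` the tangent bound of `w` at
`z₀` squeezes `h` between the affine function `h(μ) + ⟪μ - z₀, · - μ⟫` and that function plus
`½‖· - μ‖²`, so `∇h(μ) = μ - z₀`. At a critical point `β̂` the gradient
`(β̂ - y) - (β̂ - z₀) - ∇log π(β̂)` of the objective vanishes, hence `z₀ = y + ∇log π(β̂)` and
`β̂ = ∇w(z₀) + z₀ = ∇w̄(z₀)`.
-/

open Set Filter Topology Asymptotics InnerProductSpace RealInnerProductSpace

lemma ConvexOn.le_add_of_hasFDerivAt {E : Type*} [NormedAddCommGroup E] [NormedSpace ℝ E]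
    {s : Set E} {f : E → ℝ} {f' : E →L[ℝ] ℝ} {x z : E} (hf : ConvexOn ℝ s f)
    (hx : x ∈ s) (hz : z ∈ s) (hd : HasFDerivAt f f' x) : f x + f' (z - x) ≤ f z := by
  have hℓ : HasDerivAt (AffineMap.lineMap x z) (z - x) (0 : ℝ) := AffineMap.hasDerivAt_lineMap
  have hslope := (hf.comp_affineMap (AffineMap.lineMap x z)).le_slope_of_hasDerivAt
    (x := 0) (y := 1) (by simpa using hx) (by simpa using hz) one_pos
    (hd.comp_hasDerivAt_of_eq (0 : ℝ) hℓ (by simp))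
  simp only [slope_def_field, Function.comp_apply, AffineMap.lineMap_apply_zero,
    AffineMap.lineMap_apply_one, sub_zero, div_one] at hslope
  linarith

section Gradient

variable {E : Type*} [NormedAddCommGroup E] [InnerProductSpace ℝ E] [CompleteSpace E]
  {f g : E → ℝ} {f' g' x : E}

lemma HasGradientAt.add (hf : HasGradientAt f f' x) (hg : HasGradientAt g g' x) :
    HasGradientAt (fun z => f z + g z) (f' + g') x := by
  rw [hasGradientAt_iff_hasFDerivAt, map_add]
  exact hf.hasFDerivAt.add hg.hasFDerivAt

lemma HasGradientAt.sub (hf : HasGradientAt f f' x) (hg : HasGradientAt g g' x) :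
    HasGradientAt (fun z => f z - g z) (f' - g') x := by
  rw [hasGradientAt_iff_hasFDerivAt, map_sub]
  exact hf.hasFDerivAt.sub hg.hasFDerivAt

lemma IsLocalMin.hasGradientAt_eq_zero (h : IsLocalMin f x) (hf : HasGradientAt f f' x) :
    f' = 0 :=
  (toDual ℝ E).map_eq_zero_iff.1 (h.hasFDerivAt_eq_zero hf.hasFDerivAt)

lemma ConvexOn.add_inner_le_of_hasGradientAt {s : Set E} {z : E} (hf : ConvexOn ℝ s f)
    (hx : x ∈ s) (hz : z ∈ s) (hd : HasGradientAt f f' x) : f x + ⟪f', z - x⟫ ≤ f z := by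
  simpa using hf.le_add_of_hasFDerivAt hx hz hd.hasFDerivAt

lemma hasGradientAt_half_norm_sub_sq (y x : E) :
    HasGradientAt (fun z : E => (1 / 2 : ℝ) * ‖y - z‖ ^ 2) (x - y) x := by
  rw [hasGradientAt_iff_hasFDerivAt]
  refine (((hasFDerivAt_id x).const_sub y).norm_sq.const_mul (1 / 2 : ℝ)).congr_fderiv ?_
  ext v
  simp

lemma hasGradientAt_half_norm_sq (x : E) :
    HasGradientAt (fun z : E => (1 / 2 : ℝ) * ‖z‖ ^ 2) x x := by
  simpa using hasGradientAt_half_norm_sub_sq (0 : E) x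

lemma hasGradientAt_of_le_of_le_sq {C : ℝ}
    (hlo : ∀ z, f x + ⟪f', z - x⟫ ≤ f z) (hup : ∀ z, f z ≤ f x + ⟪f', z - x⟫ + C * ‖z - x‖ ^ 2) :
    HasGradientAt f f' x := by
  rw [hasGradientAt_iff_isLittleO]
  refine IsBigO.trans_isLittleO ?_ (isLittleO_pow_sub_sub x one_lt_two)
  refine IsBigO.of_bound |C| (Eventually.of_forall fun z => ?_)
  rw [Real.norm_eq_abs, Real.norm_eq_abs, abs_pow, abs_norm, abs_le]
  constructor
  · nlinarith [hlo z, mul_nonneg (abs_nonneg C) (sq_nonneg ‖z - x‖)]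
  · nlinarith [hup z, le_abs_self C, sq_nonneg ‖z - x‖]

end Gradient

lemma exists_forall_half_norm_sub_sq_add_le {E : Type*} [NormedAddCommGroup E] [ProperSpace E]
    {w : E → ℝ} (hw : Continuous w) (hwb : BddBelow (range w)) (β : E) :
    ∃ z₀, ∀ z, (1 / 2 : ℝ) * ‖β - z₀‖ ^ 2 + w z₀ ≤ (1 / 2 : ℝ) * ‖β - z‖ ^ 2 + w z := by
  obtain ⟨m, hm⟩ := hwb
  refine Continuous.exists_forall_le (by fun_prop) (tendsto_atTop_mono (fun z => ?_)
    (tendsto_atTop_add_const_right _ m (((tendsto_pow_atTop two_ne_zero).comp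
      (tendsto_dist_left_cocompact_atTop β)).const_mul_atTop one_half_pos)))
  simp only [Function.comp_apply, dist_eq_norm]
  linarith [hm (mem_range_self z)]

section MoreauEnvelope

variable {E : Type*} [NormedAddCommGroup E] [InnerProductSpace ℝ E] {w : E → ℝ}

/-- The paper's `h`. The `⨅` is a junk `0` when the family is unbounded below. -/
noncomputable def moreauEnvelope (w : E → ℝ) (β : E) : ℝ :=
  ⨅ z, (1 / 2 : ℝ) * ‖β - z‖ ^ 2 + w z

lemma exists_hasGradientAt_eq_sub [ProperSpace E] (hw : Differentiable ℝ w)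
    (hwb : BddBelow (range w)) (β : E) : ∃ z₀, HasGradientAt w (β - z₀) z₀ := by
  obtain ⟨z₀, hmin⟩ := exists_forall_half_norm_sub_sq_add_le hw.continuous hwb β
  have hφ := (hasGradientAt_half_norm_sub_sq β z₀).add (hw z₀).hasGradientAt
  have hzero := IsLocalMin.hasGradientAt_eq_zero (Eventually.of_forall hmin) hφ
  have hgrad : gradient w z₀ = β - z₀ := by
    rw [← sub_eq_zero, ← hzero]
    abel
  exact ⟨z₀, hgrad ▸ (hw z₀).hasGradientAt⟩

lemma add_inner_le_half_norm_sub_sq_add [CompleteSpace E] (hwc : ConvexOn ℝ univ w)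
    {β z₀ : E} (hg : HasGradientAt w (β - z₀) z₀) (β' z : E) :
    (1 / 2 : ℝ) * ‖β - z₀‖ ^ 2 + w z₀ + ⟪β - z₀, β' - β⟫ ≤ (1 / 2 : ℝ) * ‖β' - z‖ ^ 2 + w z := by
  have hsub := hwc.add_inner_le_of_hasGradientAt (mem_univ z₀) (mem_univ z) hg
  have hsplit : β' - z = (β - z₀) + ((β' - β) - (z - z₀)) := by abel
  rw [hsplit, norm_add_sq_real, inner_sub_right (β - z₀) (β' - β)]
  nlinarith [sq_nonneg ‖(β' - β) - (z - z₀)‖]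

theorem hasGradientAt_moreauEnvelope [CompleteSpace E] (hwc : ConvexOn ℝ univ w) {β z₀ : E}
    (hg : HasGradientAt w (β - z₀) z₀) : HasGradientAt (moreauEnvelope w) (β - z₀) β := by
  have hlow := add_inner_le_half_norm_sub_sq_add hwc hg
  have hle (β' : E) : moreauEnvelope w β' ≤ (1 / 2 : ℝ) * ‖β' - z₀‖ ^ 2 + w z₀ :=
    ciInf_le ⟨_, forall_mem_range.2 (hlow β')⟩ z₀
  have hge (β' : E) : (1 / 2 : ℝ) * ‖β - z₀‖ ^ 2 + w z₀ + ⟪β - z₀, β' - β⟫ ≤ moreauEnvelope w β' :=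
    le_ciInf (hlow β')
  have hβ : moreauEnvelope w β = (1 / 2 : ℝ) * ‖β - z₀‖ ^ 2 + w z₀ :=
    le_antisymm (hle β) (by simpa using hge β)
  refine hasGradientAt_of_le_of_le_sq (C := 1 / 2) (fun β' => hβ ▸ hge β') (fun β' => ?_)
  have hsplit : β' - z₀ = (β' - β) + (β - z₀) := by abel
  calc moreauEnvelope w β' ≤ (1 / 2 : ℝ) * ‖β' - z₀‖ ^ 2 + w z₀ := hle β'
    _ = _ := by rw [hsplit, norm_add_sq_real, hβ, real_inner_comm]; ring

end MoreauEnvelope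

theorem stmt5_general {n : ℕ} (y : EuclideanSpace ℝ (Fin n))
    (π : EuclideanSpace ℝ (Fin n) → ℝ)
    (hπd : Differentiable ℝ (fun b => Real.log (π b)))
    (w : EuclideanSpace ℝ (Fin n) → ℝ) (hw0 : ∀ z, 0 ≤ w z)
    (hwd : Differentiable ℝ w) (hwc : ConvexOn ℝ Set.univ w)
    (βh : EuclideanSpace ℝ (Fin n))
    (hcrit : gradient (fun β => (1 / 2) * ‖y - β‖ ^ 2
        - (⨅ z, ((1 / 2) * ‖β - z‖ ^ 2 + w z)) - Real.log (π β)) βh = 0) :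
    βh = gradient (fun z => w z + (1 / 2) * ‖z‖ ^ 2)
          (y + gradient (fun b => Real.log (π b)) βh)
      ∧ ((∀ b, π b = 1) → βh = y + gradient w y) := by
  obtain ⟨z₀, hgw⟩ := exists_hasGradientAt_eq_sub hwd ⟨0, forall_mem_range.2 hw0⟩ βh
  have hobj := ((hasGradientAt_half_norm_sub_sq y βh).sub
    (hasGradientAt_moreauEnvelope hwc hgw)).sub (hπd βh).hasGradientAt
  have hz₀ : z₀ = y + gradient (fun b => Real.log (π b)) βh := by
    rw [← sub_eq_zero, ← hobj.gradient.symm.trans hcrit]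
    abel
  have hβh : βh = gradient (fun z => w z + (1 / 2) * ‖z‖ ^ 2) z₀ := by
    rw [(hgw.add (hasGradientAt_half_norm_sq z₀)).gradient, sub_add_cancel]
  refine ⟨hz₀ ▸ hβh, fun hπ1 => ?_⟩
  have hlogπ : gradient (fun b => Real.log (π b)) βh = 0 := by
    simp [hπ1]
  rw [hz₀, hlogπ, add_zero] at hgw
  rw [hgw.gradient, add_sub_cancel]

/-- Estimating equation for the approximate selective MAP in the saturated model:
a critical point `β̂` of `β ↦ ½‖y-β‖² - h(β) - log π(β)` (with
`h(μ) = inf_z (½‖μ-z‖² + w z)`, `w̄(z) = w z + ½‖z‖²` strictly convex and differentiable)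
satisfies `β̂ = ∇w̄(y + ∇ log π(β̂))`; with the constant prior `π ≡ 1` the approximate
selective MLE is `β̂ = y + ∇w(y)`. -/
theorem stmt5 {n : ℕ} (y : EuclideanSpace ℝ (Fin n))
    (π : EuclideanSpace ℝ (Fin n) → ℝ) (hπ : ∀ b, 0 < π b)
    (hπd : Differentiable ℝ (fun b => Real.log (π b)))
    (w : EuclideanSpace ℝ (Fin n) → ℝ) (hw0 : ∀ z, 0 ≤ w z)
    (hwd : Differentiable ℝ w) (hwc : ConvexOn ℝ Set.univ w)
    (hsc : StrictConvexOn ℝ Set.univ (fun z => w z + (1 / 2) * ‖z‖ ^ 2))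
    (βh : EuclideanSpace ℝ (Fin n))
    (hcrit : gradient (fun β => (1 / 2) * ‖y - β‖ ^ 2
        - (⨅ z, ((1 / 2) * ‖β - z‖ ^ 2 + w z)) - Real.log (π β)) βh = 0) :
    βh = gradient (fun z => w z + (1 / 2) * ‖z‖ ^ 2)
          (y + gradient (fun b => Real.log (π b)) βh)
      ∧ ((∀ b, π b = 1) → βh = y + gradient w y) :=
  stmt5_general y π hπd w hw0 hwd hwc βh hcrit
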